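/- (Lower bound of the main theorem) Suppose $\mathcal{G}$ forbids a monochromatic chain of every color and $\overline{\beta}$ are positive weights. Then the total weight of validly colored subsets of $\mathcal{P}([n])$ satisfies $\mu(\overline{\beta}, \Lambda(\mathcal{G},n)) \geq e^{(1 - O(1/n))\,\omega_{crit}(\overline{\beta})\binom{n}{\lfloor n/2\rfloor}}$. -/

import Mathlib

open Finset

/-- `𝒢` forbids a monochromatic chain of every color. -/
def Sparse (m : ℕ) (G : Set (List (Fin m))) : Prop :=
  ∀ i : Fin m, ∃ k, 1 ≤ k ∧ List.replicate k i ∈ G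

/-- A valid template supported on a chain poset (modeled as `ℕ`). -/
def ValidChainTemplate {m : ℕ} (G : Set (List (Fin m))) (t : ℕ → Finset (Fin m)) : Prop :=
  {j | t j ≠ ∅}.Finite ∧
    ∀ c : ℕ → Fin m, (∀ j, t j ≠ ∅ → c j ∈ t j) →
      ¬ ∃ l : List ℕ, l.Chain' (· < ·) ∧ (∀ j ∈ l, t j ≠ ∅) ∧ l.map c ∈ G

noncomputable def omegaChain {m : ℕ} (β : Fin m → ℝ) (t : ℕ → Finset (Fin m)) : ℝ :=
  ∑ᶠ j : ℕ, Real.log (1 + ∑ i ∈ t j, β i)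

noncomputable def omegaCrit {m : ℕ} (β : Fin m → ℝ) (G : Set (List (Fin m))) : ℝ :=
  sSup {w | ∃ t, ValidChainTemplate G t ∧ w = omegaChain β t}

/-!
The supremum `omegaCrit β G` is attained: by pigeonhole on the colours, a valid template has
at most `∑ kᵢ` non-empty levels when `replicate kᵢ i ∈ G`, so `omegaChain β` takes only
finitely many values on valid templates. Take an optimal template `t`, supported on `[0, M)`,
and put level `j` on layer `n/2 + 1 - M + j` of `𝒫([n])`. A chain of sets meets each layer at
most once, in increasing order, so every colouring subordinate to this layered template is
valid. These colourings have total weight `∏ₓ (1 + ∑_{i ∈ T x} βᵢ)`, and each of the `M` layers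
used has at least `(1 - 2M(M+1)/n) · C(n, n/2)` elements, because for `k < n/2` we have
`n (C(n, k+1) - C(n, k)) ≤ 4 (n/2 - k) C(n, n/2)`.
-/

open Real

variable {m : ℕ} {G : Set (List (Fin m))} {t : ℕ → Finset (Fin m)}

namespace ValidChainTemplate

theorem map_snd_notMem (ht : ValidChainTemplate G t) {l : List (ℕ × Fin m)} (hne : l ≠ [])
    (hl : (l.map Prod.fst).Pairwise (· < ·)) (hmem : ∀ q ∈ l, q.2 ∈ t q.1) :
    l.map Prod.snd ∉ G := by
  classical
  intro hG
  obtain ⟨q₀, -⟩ := List.exists_mem_of_ne_nil l hne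
  have hinj : ∀ q ∈ l, ∀ q' ∈ l, q.1 = q'.1 → q = q' := List.inj_on_of_nodup_map hl.nodup
  let c : ℕ → Fin m := fun j =>
    if h : ∃ q ∈ l, q.1 = j then h.choose.2
    else if h' : (t j).Nonempty then h'.choose else q₀.2
  have hc : ∀ q ∈ l, c q.1 = q.2 := by
    intro q hq
    have h : ∃ q' ∈ l, q'.1 = q.1 := ⟨q, hq, rfl⟩
    obtain ⟨hq', hfst⟩ := h.choose_spec
    simp only [c, dif_pos h, hinj _ hq' q hq hfst]
  refine ht.2 c (fun j hj => ?_) ⟨l.map Prod.fst, hl.isChain, ?_, ?_⟩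
  · by_cases h : ∃ q ∈ l, q.1 = j
    · obtain ⟨q, hq, rfl⟩ := h
      exact hc q hq ▸ hmem q hq
    · have h' := nonempty_iff_ne_empty.2 hj
      simpa only [c, dif_neg h, dif_pos h'] using h'.choose_spec
  · simp only [List.mem_map]
    rintro _ ⟨q, hq, rfl⟩
    exact ne_empty_of_mem (hmem q hq)
  · rwa [List.map_map, List.map_congr_left (f := c ∘ Prod.fst) (g := Prod.snd) hc]

theorem card_lt_of_forall_mem (ht : ValidChainTemplate G t) {i : Fin m} {k : ℕ} (hk : 1 ≤ k)
    (hkG : List.replicate k i ∈ G) {E : Finset ℕ} (hE : ∀ j ∈ E, i ∈ t j) : #E < k := by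
  by_contra! hkE
  obtain ⟨E', hE', rfl⟩ := exists_subset_card_eq hkE
  refine ht.map_snd_notMem (l := E'.sort.map fun j => (j, i)) ?_ ?_ ?_ ?_
  · simpa [← List.length_pos_iff] using hk
  · simpa [List.map_map, Function.comp_def] using E'.sortedLT_sort.pairwise
  · simp only [List.mem_map, mem_sort]
    rintro _ ⟨j, hj, rfl⟩
    exact hE j (hE' hj)
  · simpa [List.map_map, Function.comp_def] using hkG

end ValidChainTemplate

theorem Sparse.exists_card_le (hsp : Sparse m G) :
    ∃ K, ∀ t, ValidChainTemplate G t → ∀ J : Finset ℕ, (∀ j ∈ J, t j ≠ ∅) → #J ≤ K := by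
  classical
  choose k hk hkG using hsp
  refine ⟨∑ i, k i, fun t ht J hJ => ?_⟩
  calc #J ≤ #(univ.biUnion fun i => {j ∈ J | i ∈ t j}) := by
        refine card_le_card fun j hj => ?_
        obtain ⟨i, hi⟩ := nonempty_iff_ne_empty.2 (hJ j hj)
        exact mem_biUnion.2 ⟨i, mem_univ i, mem_filter.2 ⟨hj, hi⟩⟩
    _ ≤ ∑ i, #{j ∈ J | i ∈ t j} := card_biUnion_le
    _ ≤ ∑ i, k i := sum_le_sum fun i _ =>
        (ht.card_lt_of_forall_mem (hk i) (hkG i) fun _ hj => (mem_filter.1 hj).2).le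

noncomputable def slotWeight (β : Fin m → ℝ) (S : Finset (Fin m)) : ℝ :=
  1 + ∑ i ∈ S, β i

theorem one_le_slotWeight {β : Fin m → ℝ} (hβ : ∀ i, 0 ≤ β i) (S : Finset (Fin m)) :
    1 ≤ slotWeight β S :=
  le_add_of_nonneg_right (sum_nonneg fun i _ => hβ i)

theorem omegaChain_eq_sum (β : Fin m → ℝ) {J : Finset ℕ} (hJ : ∀ j ∉ J, t j = ∅) :
    omegaChain β t = ∑ j ∈ J, log (slotWeight β (t j)) :=
  finsum_eq_sum_of_support_subset _ fun j hj => by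
    by_contra hjJ
    simp [hJ j hjJ] at hj

theorem Sparse.finite_omegaChain (hsp : Sparse m G) (β : Fin m → ℝ) :
    {w | ∃ t, ValidChainTemplate G t ∧ w = omegaChain β t}.Finite := by
  classical
  obtain ⟨K, hK⟩ := hsp.exists_card_le
  refine (Set.finite_range fun c : Finset (Fin m) → Fin (K + 1) =>
    ∑ S, (c S : ℝ) * log (slotWeight β S)).subset ?_
  rintro _ ⟨t, ht, rfl⟩
  set J := ht.1.toFinset
  have hJ : ∀ j, j ∈ J ↔ t j ≠ ∅ := fun j => ht.1.mem_toFinset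
  refine ⟨fun S => ⟨#{j ∈ J | t j = S}, Nat.lt_succ_of_le <|
    (card_filter_le _ _).trans (hK t ht J fun j => (hJ j).1)⟩, ?_⟩
  rw [omegaChain_eq_sum β fun j hj => not_not.1 (mt (hJ j).2 hj),
    ← sum_fiberwise' J t fun S => log (slotWeight β S)]
  refine sum_congr rfl fun S _ => ?_
  rw [sum_const, nsmul_eq_mul]

theorem validChainTemplate_empty (hG : [] ∉ G) : ValidChainTemplate G fun _ => ∅ := by
  refine ⟨by simp, fun c _ ⟨l, _, hl, hlG⟩ => hG ?_⟩
  rwa [List.eq_nil_iff_forall_not_mem.2 fun j hj => hl j hj rfl] at hlG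

theorem Sparse.exists_omegaChain_eq_omegaCrit (hsp : Sparse m G) (hG : [] ∉ G)
    (β : Fin m → ℝ) : ∃ t, ValidChainTemplate G t ∧ omegaChain β t = omegaCrit β G := by
  have hne : {w | ∃ t, ValidChainTemplate G t ∧ w = omegaChain β t}.Nonempty :=
    ⟨_, _, validChainTemplate_empty hG, rfl⟩
  obtain ⟨t, ht, h⟩ := hne.csSup_mem (hsp.finite_omegaChain β)
  exact ⟨t, ht, h.symm⟩

theorem ValidChainTemplate.exists_eq_empty_of_le (ht : ValidChainTemplate G t) :
    ∃ M, ∀ j, M ≤ j → t j = ∅ := by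
  obtain ⟨B, hB⟩ := ht.1.bddAbove
  exact ⟨B + 1, fun j hj => not_not.1 fun h => by have := hB h; omega⟩

/-- Membership in `Λ(G, n)`; `none` marks an uncoloured set. -/
abbrev FreeOfChains {n : ℕ} (G : Set (List (Fin m))) (f : Finset (Fin n) → Option (Fin m)) :
    Prop :=
  ¬ ∃ l : List (Finset (Fin n) × Fin m), (l.map Prod.fst).IsChain (· ⊂ ·) ∧
    (∀ q ∈ l, f q.1 = some q.2) ∧ l.map Prod.snd ∈ G

def shiftTemplate (t : ℕ → Finset (Fin m)) (b d : ℕ) : Finset (Fin m) :=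
  if b ≤ d then t (d - b) else ∅

theorem mem_shiftTemplate {b d : ℕ} {i : Fin m} :
    i ∈ shiftTemplate t b d ↔ b ≤ d ∧ i ∈ t (d - b) := by
  unfold shiftTemplate
  split_ifs with h <;> simp [h]

theorem ValidChainTemplate.freeOfChains (ht : ValidChainTemplate G t) (hG : [] ∉ G) (b : ℕ)
    {n : ℕ} {f : Finset (Fin n) → Option (Fin m)}
    (hf : ∀ x i, f x = some i → i ∈ shiftTemplate t b #x) : FreeOfChains G f := by
  rintro ⟨l, hchain, hcol, hlG⟩
  have hl : ∀ q ∈ l, b ≤ #q.1 ∧ q.2 ∈ t (#q.1 - b) :=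
    fun q hq => mem_shiftTemplate.1 (hf _ _ (hcol q hq))
  refine ht.map_snd_notMem (l := l.map fun q => (#q.1 - b, q.2)) ?_ ?_ ?_ ?_
  · rw [Ne, List.map_eq_nil_iff]
    rintro rfl
    exact hG hlG
  · rw [List.map_map, List.pairwise_map]
    refine (List.pairwise_map.1 (List.isChain_iff_pairwise.1 hchain)).imp_of_mem
      fun hq hq' hlt => ?_
    have := card_lt_card hlt
    have := (hl _ hq).1
    simp only [Function.comp_apply]
    omega
  · simp only [List.mem_map]
    rintro _ ⟨q, hq, rfl⟩
    exact (hl q hq).2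
  · simpa [List.map_map, Function.comp_def] using hlG

open scoped Classical in
theorem prod_slotWeight_le_sum {n : ℕ} {β : Fin m → ℝ} (hβ : ∀ i, 0 ≤ β i)
    (T : Finset (Fin n) → Finset (Fin m))
    (hT : ∀ f, (∀ x i, f x = some i → i ∈ T x) → FreeOfChains G f) :
    ∏ x, slotWeight β (T x) ≤
      ∑ f ∈ univ.filter (FreeOfChains (n := n) G), ∏ x, (f x).elim 1 β := by
  calc ∏ x, slotWeight β (T x)
      = ∑ f ∈ Fintype.piFinset fun x => (T x).insertNone, ∏ x, (f x).elim 1 β := by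
        rw [← prod_univ_sum (fun x => (T x).insertNone) fun _ o => o.elim 1 β]
        simp [slotWeight]
    _ ≤ _ := by
      refine sum_le_sum_of_subset_of_nonneg (fun f hf => mem_filter.2 ⟨mem_univ f, hT f ?_⟩)
        fun f _ _ => prod_nonneg fun x _ => ?_
      · intro x i hi
        simpa [hi] using Fintype.mem_piFinset.1 hf x
      · cases f x <;> simp [hβ]

theorem Nat.mul_choose_succ_le {n k : ℕ} (hk : k + 1 ≤ n / 2) :
    n * n.choose (k + 1) ≤ n * n.choose k + 4 * (n / 2 - k) * n.choose (n / 2) := by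
  have hrec := Nat.choose_succ_right_eq n k
  have hmid := Nat.choose_le_middle (k + 1) n
  have hn : n ≤ 2 * (n / 2) + 1 := by omega
  have hkn : 2 * k + 2 ≤ n := by omega
  generalize n / 2 = h at *
  zify [(by omega : k ≤ n), (by omega : k ≤ h)] at *
  set A : ℤ := (n.choose (k + 1) : ℤ)
  set X : ℤ := (n.choose h : ℤ)
  -- By `hrec`, `(n - k) (A - n.choose k) = A (n - 2k - 1)`; then use `A ≤ X`,
  -- `n - 2k - 1 ≤ 2 (h - k)` and `n ≤ 2 (n - k)`.
  have h1 : n * A * (n - 2 * k - 1) ≤ n * X * (n - 2 * k - 1) := by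
    gcongr
    linarith
  have h2 : n * X * (n - 2 * k - 1) ≤ 2 * (n - k) * X * (2 * (h - k)) := by
    have hX : 0 ≤ X := by positivity
    exact mul_le_mul (mul_le_mul_of_nonneg_right (by linarith) hX) (by linarith) (by linarith)
      (mul_nonneg (by linarith) hX)
  refine le_of_mul_le_mul_left ?_ (by linarith : (0 : ℤ) < n - k)
  linarith [congrArg ((n : ℤ) * ·) hrec]

theorem Nat.mul_choose_middle_le {n r : ℕ} (hr : r ≤ n / 2) :
    n * n.choose (n / 2) ≤ n * n.choose (n / 2 - r) + 2 * r * (r + 1) * n.choose (n / 2) := by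
  induction r with
  | zero => simp
  | succ r ih =>
    have step := Nat.mul_choose_succ_le (n := n) (k := n / 2 - (r + 1)) (by omega)
    rw [show n / 2 - (r + 1) + 1 = n / 2 - r by omega,
      show n / 2 - (n / 2 - (r + 1)) = r + 1 by omega] at step
    linarith [ih (by omega)]

theorem one_sub_div_mul_choose_middle_le {n r : ℕ} (hr : r ≤ n / 2) :
    (1 - 2 * r * (r + 1) / n : ℝ) * n.choose (n / 2) ≤ n.choose (n / 2 - r) := by
  rcases n.eq_zero_or_pos with rfl | hn
  · simp
  have key : (n : ℝ) * n.choose (n / 2) ≤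
      n * n.choose (n / 2 - r) + 2 * r * (r + 1) * n.choose (n / 2) := by
    exact_mod_cast Nat.mul_choose_middle_le hr
  have hn' : (0 : ℝ) < n := by exact_mod_cast hn
  rw [sub_mul, one_mul, div_mul_eq_mul_div, sub_le_iff_le_add, ← sub_le_iff_le_add',
    le_div_iff₀ hn']
  linarith

theorem sum_choose_mul_log_slotWeight_ge {β : Fin m → ℝ} (hβ : ∀ i, 0 ≤ β i) {M n : ℕ}
    (hMn : M ≤ n / 2) :
    (1 - 2 * M * (M + 1) / n : ℝ) * (∑ j ∈ range M, log (slotWeight β (t j))) *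
        n.choose (n / 2) ≤
      ∑ d ∈ range (n + 1),
        n.choose d * log (slotWeight β (shiftTemplate t (n / 2 + 1 - M) d)) := by
  set b := n / 2 + 1 - M
  have hlog : ∀ S, 0 ≤ log (slotWeight β S) := fun S => log_nonneg (one_le_slotWeight hβ S)
  calc (1 - 2 * M * (M + 1) / n : ℝ) * (∑ j ∈ range M, log (slotWeight β (t j))) *
        n.choose (n / 2)
      = ∑ j ∈ range M, (1 - 2 * M * (M + 1) / n : ℝ) * n.choose (n / 2) *
          log (slotWeight β (t j)) := by
        rw [mul_sum, sum_mul]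
        exact sum_congr rfl fun j _ => by ring
    _ ≤ ∑ j ∈ range M,
          (n.choose (b + j) : ℝ) * log (slotWeight β (shiftTemplate t b (b + j))) := by
        refine sum_le_sum fun j hj => ?_
        rw [mem_range] at hj
        rw [shiftTemplate, if_pos (Nat.le_add_right b j), Nat.add_sub_cancel_left]
        refine mul_le_mul_of_nonneg_right ?_ (hlog _)
        have hr := one_sub_div_mul_choose_middle_le (n := n) (r := M - 1 - j) (by omega)
        rw [show n / 2 - (M - 1 - j) = b + j by omega] at hr
        refine le_trans (mul_le_mul_of_nonneg_right ?_ (Nat.cast_nonneg _)) hr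
        have : ((M - 1 - j : ℕ) : ℝ) ≤ M := by exact_mod_cast (by omega : M - 1 - j ≤ M)
        gcongr
    _ = ∑ d ∈ Ico b (b + M), n.choose d * log (slotWeight β (shiftTemplate t b d)) := by
        rw [sum_Ico_eq_sum_range, Nat.add_sub_cancel_left]
    _ ≤ _ := sum_le_sum_of_subset_of_nonneg (fun d hd => by simp at hd ⊢; omega)
        fun d _ _ => mul_nonneg (Nat.cast_nonneg _) (hlog _)

theorem le_sum_log_slotWeight_shiftTemplate {β : Fin m → ℝ} (hβ : ∀ i, 0 ≤ β i) {M : ℕ}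
    (hM : ∀ j, M ≤ j → t j = ∅) {n : ℕ} (hn : 0 < n) :
    (1 - 2 * M * (M + 1) / n : ℝ) * omegaChain β t * n.choose (n / 2) ≤
      ∑ x : Finset (Fin n), log (slotWeight β (shiftTemplate t (n / 2 + 1 - M) #x)) := by
  set F := fun d => log (slotWeight β (shiftTemplate t (n / 2 + 1 - M) d))
  have hlog : ∀ S, 0 ≤ log (slotWeight β S) := fun S => log_nonneg (one_le_slotWeight hβ S)
  rw [omegaChain_eq_sum β (J := range M) fun j hj => hM j (by simpa using hj), ← powerset_univ,
    sum_powerset_apply_card F, card_univ, Fintype.card_fin]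
  simp only [nsmul_eq_mul]
  rcases le_or_gt (n : ℝ) (2 * M * (M + 1)) with hsmall | hlarge
  · have hcoef : (1 - 2 * M * (M + 1) / n : ℝ) ≤ 0 := by
      rw [sub_nonpos, one_le_div (by positivity)]
      exact hsmall
    refine le_trans ?_ (sum_nonneg fun d _ => mul_nonneg (Nat.cast_nonneg _) (hlog _))
    exact mul_nonpos_of_nonpos_of_nonneg
      (mul_nonpos_of_nonpos_of_nonneg hcoef (sum_nonneg fun j _ => hlog _)) (Nat.cast_nonneg _)
  · refine sum_choose_mul_log_slotWeight_ge hβ ?_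
    have : 2 * M * (M + 1) < n := by exact_mod_cast hlarge
    have : 2 * M ≤ 2 * M * (M + 1) := Nat.le_mul_of_pos_right _ M.succ_pos
    omega

open scoped Classical in
theorem stmt16 (m : ℕ) (β : Fin m → ℝ) (hβ : ∀ i, 0 < β i)
    (G : Set (List (Fin m))) (hsp : Sparse m G) (hG2 : ∀ l ∈ G, 2 ≤ l.length) :
    ∃ Cc : ℝ, ∀ n : ℕ, 1 ≤ n →
      Real.exp ((1 - Cc / n) * omegaCrit β G * (n.choose (n / 2))) ≤
        ∑ f ∈ Finset.univ.filter (fun f : Finset (Fin n) → Option (Fin m) =>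
            ¬ ∃ l : List (Finset (Fin n) × Fin m), (l.map Prod.fst).Chain' (· ⊂ ·) ∧
              (∀ q ∈ l, f q.1 = some q.2) ∧ l.map Prod.snd ∈ G),
          ∏ x : Finset (Fin n), (f x).elim 1 β := by
  have hG : [] ∉ G := fun h => by simpa using hG2 [] h
  have hβ₀ : ∀ i, 0 ≤ β i := fun i => (hβ i).le
  obtain ⟨t, ht, hωt⟩ := hsp.exists_omegaChain_eq_omegaCrit hG β
  obtain ⟨M, hM⟩ := ht.exists_eq_empty_of_le
  refine ⟨2 * M * (M + 1), fun n hn => ?_⟩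
  set T : Finset (Fin n) → Finset (Fin m) := fun x => shiftTemplate t (n / 2 + 1 - M) #x
  rw [← hωt]
  calc exp ((1 - 2 * M * (M + 1) / n) * omegaChain β t * n.choose (n / 2))
      ≤ exp (∑ x, log (slotWeight β (T x))) :=
        exp_le_exp.2 (le_sum_log_slotWeight_shiftTemplate hβ₀ hM hn)
    _ = ∏ x, slotWeight β (T x) := by
        rw [exp_sum]
        exact prod_congr rfl fun x _ => exp_log (by linarith [one_le_slotWeight hβ₀ (T x)])
    _ ≤ _ := prod_slotWeight_le_sum hβ₀ T fun f hf => ht.freeOfChains hG _ hf
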